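/- Let A be an n×n row-stochastic matrix whose powers Aᵏ converge to a matrix Ω such that ΩᵀΩ has all positive entries (e.g., A irreducible and aperiodic with limit uᵀπ, π > 0). If X ∈ ℝ^{C(n,2)} is nonnegative and satisfies X̂ = AX̂Aᵀ, then X = 0. Likewise, if X̂ = AᵀX̂A, then X = 0. -/

import Mathlib

open Matrix BigOperators Filter

/-- Index set of pairs `(i,j)` with `i < j`. -/
abbrev Pairs (n : ℕ) := {p : Fin n × Fin n // p.1 < p.2}

/-- Zeon second power: matrix of 2×2 permanents. -/
def zeonSq {n : ℕ} {R : Type*} [CommRing R] (A : Matrix (Fin n) (Fin n) R) :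
    Matrix (Pairs n) (Pairs n) R :=
  Matrix.of fun I J =>
    A I.1.1 J.1.1 * A I.1.2 J.1.2 + A I.1.1 J.1.2 * A I.1.2 J.1.1

/-- `Mat(X)`: symmetric matrix with zero diagonal built from a vector indexed by pairs. -/
def matOf {n : ℕ} {R : Type*} [CommRing R] (X : Pairs n → R) :
    Matrix (Fin n) (Fin n) R :=
  Matrix.of fun i j =>
    if h : i < j then X ⟨(i, j), h⟩ else if h' : j < i then X ⟨(j, i), h'⟩ else 0

/-!
Passing to the limit in `M = A M Aᵀ` gives `M = Ω M Ωᵀ` for `M = Mat(X) ≥ 0`. Since `M` has zero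
diagonal, every term `Ω i a * M a b * Ω i b` of `(Ω M Ωᵀ) i i` vanishes, and summing over `i`
gives `M a b * (ΩᵀΩ) a b = 0`. For `M = Aᵀ M A` the same argument needs `ΩΩᵀ > 0`. The limit `Ω`
is stochastic and idempotent, so each row of `Ω` averages every column of `Ω`: a column maximum
spreads along positive entries, hence `Ω i j > 0` forces `Ω j i > 0` when column `i` is nonzero.
So positive entries `Ω m a, Ω m b` (from `ΩᵀΩ > 0`) give positive entries `Ω a m, Ω b m`.
-/

section matOf

variable {n : ℕ} {R : Type*} [CommRing R]

theorem matOf_apply_self (X : Pairs n → R) (i : Fin n) : matOf X i i = 0 := by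
  simp [matOf]

theorem matOf_nonneg [PartialOrder R] {X : Pairs n → R} (hX : ∀ I, 0 ≤ X I) (i j : Fin n) :
    0 ≤ matOf X i j := by
  simp only [matOf, of_apply]
  split_ifs <;> first | exact hX _ | exact le_rfl

theorem eq_zero_of_matOf_eq_zero {X : Pairs n → R} (h : matOf X = 0) : X = 0 := by
  funext ⟨⟨i, j⟩, hij⟩
  simpa [matOf, hij] using congrFun (congrFun h i) j

end matOf

theorem isIdempotentElem_of_tendsto_pow {M : Type*} [Monoid M] [TopologicalSpace M]
    [ContinuousMul M] [T2Space M] {A Ω : M} (h : Tendsto (fun k : ℕ => A ^ k) atTop (nhds Ω)) :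
    IsIdempotentElem Ω := by
  have hdouble : Tendsto (fun k => A ^ (k + k)) atTop (nhds Ω) :=
    h.comp (tendsto_atTop_mono (fun k => Nat.le_add_right k k) tendsto_id)
  show Ω * Ω = Ω
  refine tendsto_nhds_unique ?_ hdouble
  simpa only [pow_add] using h.mul h

namespace Matrix

variable {n R : Type*} [Fintype n]

theorem isClosed_rowStochastic [DecidableEq n] [CommSemiring R] [PartialOrder R] [IsOrderedRing R]
    [TopologicalSpace R] [IsTopologicalSemiring R] [OrderClosedTopology R] :
    IsClosed (rowStochastic R n : Set (Matrix n n R)) := by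
  have hnonneg : IsClosed {M : Matrix n n R | ∀ i j, 0 ≤ M i j} := by
    simp only [Set.ofPred_forall]
    exact isClosed_iInter fun i => isClosed_iInter fun j =>
      isClosed_le continuous_const (continuous_id.matrix_elem i j)
  exact hnonneg.inter (isClosed_eq (continuous_id.matrix_mulVec continuous_const) continuous_const)

theorem mem_rowStochastic_of_tendsto_pow [DecidableEq n] [CommSemiring R] [PartialOrder R]
    [IsOrderedRing R] [TopologicalSpace R] [IsTopologicalSemiring R] [OrderClosedTopology R]
    {A Ω : Matrix n n R} (hA : A ∈ rowStochastic R n)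
    (h : Tendsto (fun k => A ^ k) atTop (nhds Ω)) : Ω ∈ rowStochastic R n :=
  isClosed_rowStochastic.mem_of_tendsto h (Eventually.of_forall fun k => pow_mem hA k)

theorem eq_mul_mul_transpose_of_tendsto_pow [DecidableEq n] [CommSemiring R] [TopologicalSpace R]
    [IsTopologicalSemiring R] [T2Space R] {A Ω M : Matrix n n R} (hM : M = A * M * Aᵀ)
    (h : Tendsto (fun k => A ^ k) atTop (nhds Ω)) : M = Ω * M * Ωᵀ := by
  have hpow : ∀ k, A ^ k * M * (A ^ k)ᵀ = M := by
    intro k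
    induction k with
    | zero => simp
    | succ k ih =>
      calc A ^ (k + 1) * M * (A ^ (k + 1))ᵀ = A * (A ^ k * M * (A ^ k)ᵀ) * Aᵀ := by
            simp only [pow_succ', transpose_mul, Matrix.mul_assoc]
        _ = M := by rw [ih, ← hM]
  refine tendsto_nhds_unique (f := fun k => A ^ k * M * (A ^ k)ᵀ) (l := atTop) ?_ ?_
  · simpa only [hpow] using tendsto_const_nhds
  · exact (h.mul_const M).mul ((continuous_id.matrix_transpose.tendsto Ω).comp h)

variable [CommRing R] [LinearOrder R] [IsStrictOrderedRing R]

theorem eq_zero_of_eq_mul_mul_transpose {M W : Matrix n n R} (hM : ∀ a b, 0 ≤ M a b)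
    (hMdiag : ∀ a, M a a = 0) (hW : ∀ a b, 0 ≤ W a b) (hWW : ∀ a b, 0 < (Wᵀ * W) a b)
    (hMW : M = W * M * Wᵀ) : M = 0 := by
  have hterm_nonneg : ∀ i a b, 0 ≤ W i a * M a b * W i b := fun i a b =>
    mul_nonneg (mul_nonneg (hW i a) (hM a b)) (hW i b)
  have hterm : ∀ i a b, W i a * M a b * W i b = 0 := by
    intro i a b
    have hsum : ∑ b, ∑ a, W i a * M a b * W i b = 0 := by
      rw [← hMdiag i]
      conv_rhs => rw [hMW]
      simp only [mul_apply, transpose_apply, Finset.sum_mul]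
    rw [Fintype.sum_eq_zero_iff_of_nonneg fun b => Fintype.sum_nonneg fun a => hterm_nonneg i a b]
      at hsum
    exact congrFun ((Fintype.sum_eq_zero_iff_of_nonneg (hterm_nonneg i · b)).1 (congrFun hsum b)) a
  ext a b
  have hprod : M a b * (Wᵀ * W) a b = 0 := by
    simp only [mul_apply, transpose_apply, Finset.mul_sum]
    exact Finset.sum_eq_zero fun i _ => by linear_combination hterm i a b
  exact (mul_eq_zero.1 hprod).resolve_right (hWW a b).ne'

variable [DecidableEq n]

theorem apply_eq_colMax_of_pos {Ω : Matrix n n R} (hΩ : Ω ∈ rowStochastic R n)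
    (hidem : IsIdempotentElem Ω) {i m l : n} (hmax : ∀ k, Ω k i ≤ Ω m i) (hml : 0 < Ω m l) :
    Ω l i = Ω m i := by
  -- `(Ω * Ω) m i = Ω m i` is an average of column `i`, which equals its maximum `Ω m i`.
  have hsum : ∑ k, Ω m k * (Ω m i - Ω k i) = 0 := by
    have hrow : ∑ k, Ω m k * Ω k i = Ω m i := by rw [← mul_apply, hidem.eq]
    simp only [mul_sub, Finset.sum_sub_distrib, ← Finset.sum_mul, sum_row_of_mem_rowStochastic hΩ,
      one_mul, hrow, sub_self]
  have hterm := (Fintype.sum_eq_zero_iff_of_nonneg fun k =>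
    mul_nonneg (nonneg_of_mem_rowStochastic hΩ) (sub_nonneg.2 (hmax k))).1 hsum
  have := (mul_eq_zero.1 (congrFun hterm l)).resolve_left hml.ne'
  linarith

theorem apply_pos_symm_of_isIdempotentElem {Ω : Matrix n n R} (hΩ : Ω ∈ rowStochastic R n)
    (hidem : IsIdempotentElem Ω) {i j : n} (hcol : ∃ m, 0 < Ω m i) (hij : 0 < Ω i j) :
    0 < Ω j i := by
  obtain ⟨m, hm⟩ := hcol
  obtain ⟨k, -, hk⟩ := Finset.univ.exists_max_image (fun k => Ω k i) ⟨m, Finset.mem_univ m⟩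
  replace hk : ∀ l, Ω l i ≤ Ω k i := fun l => hk l (Finset.mem_univ l)
  have hki : 0 < Ω k i := hm.trans_le (hk m)
  have hii : Ω i i = Ω k i := apply_eq_colMax_of_pos hΩ hidem hk hki
  have hji : Ω j i = Ω k i := hii ▸ apply_eq_colMax_of_pos hΩ hidem (hii ▸ hk) hij
  exact hji ▸ hki

theorem mul_transpose_apply_pos {Ω : Matrix n n R} (hΩ : Ω ∈ rowStochastic R n)
    (hidem : IsIdempotentElem Ω) (hpos : ∀ a b, 0 < (Ωᵀ * Ω) a b) (a b : n) :
    0 < (Ω * Ωᵀ) a b := by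
  have hΩ0 : ∀ i j, 0 ≤ Ω i j := fun i j => nonneg_of_mem_rowStochastic hΩ
  have hcommon : ∀ a b, ∃ m, 0 < Ω m a ∧ 0 < Ω m b := fun a b => by
    obtain ⟨m, -, hm⟩ : ∃ m ∈ Finset.univ, (0 : R) < Ω m a * Ω m b :=
      Finset.exists_lt_of_sum_lt (f := fun _ => 0) (by simpa [mul_apply] using hpos a b)
    exact ⟨m, pos_of_mul_pos_left hm (hΩ0 m b), pos_of_mul_pos_right hm (hΩ0 m a)⟩
  have hcol : ∀ i, ∃ k, 0 < Ω k i := fun i => (hcommon i i).imp fun _ => And.left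
  obtain ⟨m, hma, hmb⟩ := hcommon a b
  have ham : 0 < Ω a m := apply_pos_symm_of_isIdempotentElem hΩ hidem (hcol m) hma
  have hbm : 0 < Ω b m := apply_pos_symm_of_isIdempotentElem hΩ hidem (hcol m) hmb
  rw [mul_apply]
  exact Finset.sum_pos' (fun i _ => mul_nonneg (hΩ0 a i) (hΩ0 b i))
    ⟨m, Finset.mem_univ m, mul_pos ham hbm⟩

end Matrix

theorem stmt13 {n : ℕ} (A : Matrix (Fin n) (Fin n) ℝ)
    (hA0 : ∀ i j, 0 ≤ A i j) (hA1 : ∀ i, ∑ j, A i j = 1)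
    (Ω : Matrix (Fin n) (Fin n) ℝ)
    (hlim : Filter.Tendsto (fun k => A ^ k) Filter.atTop (nhds Ω))
    (hpos : ∀ i j, 0 < (Ωᵀ * Ω) i j)
    (X : Pairs n → ℝ) (hX : ∀ I, 0 ≤ X I) :
    (matOf X = A * matOf X * Aᵀ → X = 0) ∧
      (matOf X = Aᵀ * matOf X * A → X = 0) := by
  have hA : A ∈ rowStochastic ℝ (Fin n) := mem_rowStochastic_iff_sum.2 ⟨hA0, hA1⟩
  have hΩ : Ω ∈ rowStochastic ℝ (Fin n) := mem_rowStochastic_of_tendsto_pow hA hlim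
  have hidem : IsIdempotentElem Ω := isIdempotentElem_of_tendsto_pow hlim
  have hfixed : ∀ W : Matrix (Fin n) (Fin n) ℝ, (∀ a b, 0 ≤ W a b) → (∀ a b, 0 < (Wᵀ * W) a b) →
      matOf X = W * matOf X * Wᵀ → X = 0 := fun W hW hWW h =>
    eq_zero_of_matOf_eq_zero
      (eq_zero_of_eq_mul_mul_transpose (matOf_nonneg hX) (matOf_apply_self X) hW hWW h)
  refine ⟨fun h => hfixed Ω (fun _ _ => nonneg_of_mem_rowStochastic hΩ) hpos
    (eq_mul_mul_transpose_of_tendsto_pow h hlim), fun h => ?_⟩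
  have hlimT : Tendsto (fun k => Aᵀ ^ k) atTop (nhds Ωᵀ) := by
    have h : Tendsto (fun k => (A ^ k)ᵀ) atTop (nhds Ωᵀ) :=
      (continuous_id.matrix_transpose.tendsto Ω).comp hlim
    simpa only [transpose_pow] using h
  refine hfixed Ωᵀ (fun _ _ => nonneg_of_mem_rowStochastic hΩ) ?_ ?_
  · simpa only [transpose_transpose] using mul_transpose_apply_pos hΩ hidem hpos
  · exact eq_mul_mul_transpose_of_tendsto_pow (by rwa [transpose_transpose]) hlimT
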